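/- For a connected graph G, all maximal independent sets of G are robust if and only if G is a complete bipartite graph or a sputnik graph. -/

import Mathlib

/-!
An MIS `M` stops being maximal in a connected spanning subgraph `H` exactly when some `x ∉ M` has
lost all its edges to `M`. In a complete bipartite graph `M` is a whole side, so this cannot
happen. In a sputnik graph such an `x` lies on a cycle (an `H`-path joins it to a `G`-neighbour in
`M`), hence has a pendant neighbour `w`; if `w ∈ M` its only edge `wx` survives in `H`, and if
`w ∉ M` then `x ∈ M`.

Conversely, let every MIS be robust. If deleting the edges between `y ∉ M` and `M` keeps `G`
connected, `M` is not robust; so every MIS avoiding a non-cut vertex `y` contains `N(y)`. Let `v`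
lie on a cycle and have no pendant neighbour. MIS avoiding `v` and some neighbour of `v` in every
component of `G - v` show that `N(v)` is independent and that neighbours of `v` in a common
component of `G - v` have the same neighbours besides `v`. Hence a neighbour `a₁` of `v` on the
cycle is a non-cut vertex, which forces `N(a₁)` to be independent, all of `N(v)` to lie in the
component of `a₁`, and `N(N(a₁)) ⊆ N(v)`: `G` is complete bipartite with sides `N(v)`, `N(a₁)`.
-/

open SimpleGraph

variable {V : Type*}

/-- `S` is an independent set in `G`: no two vertices of `S` are adjacent. -/
def Indep (G : SimpleGraph V) (S : Set V) : Prop :=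
  ∀ u ∈ S, ∀ v ∈ S, ¬ G.Adj u v

/-- `M` is a maximal independent set of `G` (maximal for inclusion). -/
def IsMIS (G : SimpleGraph V) (M : Set V) : Prop :=
  Indep G M ∧ ∀ S : Set V, Indep G S → M ⊆ S → S = M

/-- `M` is robust in `G`: it is a maximal independent set of every
connected spanning subgraph of `G`. -/
def RobustMIS (G : SimpleGraph V) (M : Set V) : Prop :=
  ∀ H : SimpleGraph V, H ≤ G → H.Connected → IsMIS H M

/-- A pendant vertex: a vertex with exactly one neighbor. -/
def Pendant (G : SimpleGraph V) (v : V) : Prop :=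
  ∃! w, G.Adj v w

/-- `v` lies on a cycle of `G`. -/
def OnCycle (G : SimpleGraph V) (v : V) : Prop :=
  ∃ p : G.Walk v v, p.IsCycle

/-- `v` has at least one pendant neighbor. -/
def HasPendantNeighbor (G : SimpleGraph V) (v : V) : Prop :=
  ∃ w, G.Adj v w ∧ Pendant G w

/-- A sputnik graph: every vertex on a cycle has a pendant neighbor. -/
def Sputnik (G : SimpleGraph V) : Prop :=
  ∀ v, OnCycle G v → HasPendantNeighbor G v

/-- `G` is a complete bipartite graph with parts `V1`, `V2`. -/
def IsCompleteBipartiteWith (G : SimpleGraph V) (V1 V2 : Set V) : Prop :=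
  (∀ v, v ∈ V1 ↔ v ∉ V2) ∧
    (∀ u v, G.Adj u v ↔ ((u ∈ V1 ∧ v ∈ V2) ∨ (u ∈ V2 ∧ v ∈ V1)))

/-- `G` is a complete bipartite graph. -/
def IsCompleteBipartite (G : SimpleGraph V) : Prop :=
  ∃ V1 V2 : Set V, IsCompleteBipartiteWith G V1 V2

/-- `G` is biconnected: at least three vertices, and removing any
single vertex leaves it connected. -/
def Biconnected (G : SimpleGraph V) : Prop :=
  3 ≤ Nat.card V ∧ ∀ w : V, (G.induce {v | v ≠ w}).Connected

section Independence

variable {G H : SimpleGraph V}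

lemma Indep.mono (hle : H ≤ G) {S : Set V} (hS : Indep G S) : Indep H S :=
  fun u hu w hw huw => hS u hu w hw (hle huw)

lemma Indep.notMem_of_adj {S : Set V} (hS : Indep G S) {x t : V} (ht : t ∈ S)
    (hxt : G.Adj x t) : x ∉ S :=
  fun hx => hS x hx t ht hxt

lemma indep_singleton (x : V) : Indep G {x} := by
  rintro u rfl w rfl huw
  exact G.irrefl huw

lemma indep_pair {x y : V} (h : ¬G.Adj x y) : Indep G {x, y} := by
  rintro u (rfl | rfl) w (rfl | rfl) huw
  · exact G.irrefl huw
  · exact h huw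
  · exact h huw.symm
  · exact G.irrefl huw

lemma isMIS_iff {M : Set V} : IsMIS G M ↔ Indep G M ∧ ∀ x ∉ M, ∃ u ∈ M, G.Adj x u := by
  refine ⟨fun hM => ⟨hM.1, fun x hx => ?_⟩, fun ⟨hind, hdom⟩ => ⟨hind, fun S hS hMS => ?_⟩⟩
  · by_contra! h
    have hins : Indep G (insert x M) := by
      rintro u (rfl | hu) w (rfl | hw) huw
      · exact G.irrefl huw
      · exact h w hw huw
      · exact h u hu huw.symm
      · exact hM.1 u hu w hw huw
    exact hx (hM.2 _ hins (Set.subset_insert x M) ▸ Set.mem_insert x M)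
  · refine Set.Subset.antisymm (fun x hxS => ?_) hMS
    by_contra hx
    obtain ⟨u, hu, hxu⟩ := hdom x hx
    exact hS x hxS u (hMS hu) hxu

lemma exists_isMIS_superset {T : Set V} (hT : Indep G T) : ∃ M, IsMIS G M ∧ T ⊆ M := by
  have hchain : ∀ c ⊆ {S | Indep G S}, IsChain (· ⊆ ·) c → Indep G (⋃₀ c) := by
    rintro c hc hchain u ⟨A, hA, hu⟩ w ⟨B, hB, hw⟩ huw
    rcases hchain.total hA hB with h | h
    · exact hc hB u (h hu) w hw huw
    · exact hc hA u hu w (h hw) huw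
  obtain ⟨M, hTM, hmax⟩ := zorn_subset_nonempty {S | Indep G S}
    (fun c hc hc' _ => ⟨⋃₀ c, hchain c hc hc', fun s hs => Set.subset_sUnion_of_mem hs⟩) T hT
  exact ⟨M, ⟨hmax.prop, fun S hS hMS => (hmax.eq_of_subset hS hMS).symm⟩, hTM⟩

lemma exists_isMIS_of_not_adj {x y : V} (h : ¬G.Adj x y) : ∃ M, IsMIS G M ∧ x ∈ M ∧ y ∈ M := by
  obtain ⟨M, hM, hxyM⟩ := exists_isMIS_superset (indep_pair h)
  exact ⟨M, hM, hxyM (Set.mem_insert x _), hxyM (Set.mem_insert_of_mem x rfl)⟩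

end Independence

section Connectivity

variable {G H : SimpleGraph V}

lemma SimpleGraph.Connected.forall_of_adj_closed (hG : G.Connected) {P : V → Prop} {v : V}
    (hv : P v) (hP : ∀ x y, G.Adj x y → P y → P x) (x : V) : P x := by
  obtain ⟨p⟩ := hG.preconnected x v
  induction p with
  | nil => exact hv
  | cons h _ ih => exact hP _ _ h (ih hv)

lemma SimpleGraph.Walk.reachable_deleteIncidenceSet {v x y : V} (p : G.Walk x y)
    (hv : v ∉ p.support) : (G.deleteIncidenceSet v).Reachable x y := by
  induction p with
  | nil => rfl
  | cons h q ih =>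
    simp only [Walk.support_cons, List.mem_cons, not_or] at hv
    exact (deleteIncidenceSet_adj.2 ⟨h, Ne.symm hv.1, fun h' => hv.2 (h' ▸ q.start_mem_support)⟩
      ).reachable.trans (ih hv.2)

lemma eq_of_reachable_deleteIncidenceSet {v x : V} (h : (G.deleteIncidenceSet v).Reachable x v) :
    x = v := by
  obtain ⟨p⟩ := h.symm
  cases p with
  | nil => rfl
  | cons h _ => exact absurd rfl (deleteIncidenceSet_adj.1 h).2.1

lemma OnCycle.exists_adj_adj_reachable {v : V} (h : OnCycle G v) :
    ∃ a₁ a₂, G.Adj v a₁ ∧ G.Adj v a₂ ∧ a₁ ≠ a₂ ∧ (G.deleteIncidenceSet v).Reachable a₁ a₂ := by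
  obtain ⟨p, hp⟩ := h
  have hlen := hp.three_le_length
  have hnil : ¬p.Nil := hp.not_nil
  have hd : ¬p.dropLast.Nil := by
    rw [Walk.not_nil_iff_lt_length, Walk.length_dropLast]
    omega
  have hsnd : p.dropLast.snd = p.snd := Walk.getVert_dropLast (by omega)
  have hv : v ∉ p.dropLast.tail.support := by
    have := hp.isPath_dropLast.support_nodup
    rw [← Walk.cons_support_tail hd, List.nodup_cons] at this
    exact this.1
  exact ⟨p.snd, p.penultimate, p.adj_snd hnil, (p.adj_penultimate hnil).symm,
    hp.snd_ne_penultimate, hsnd ▸ Walk.reachable_deleteIncidenceSet _ hv⟩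

lemma onCycle_of_reachable_of_not_adj (hle : H ≤ G) {x u : V} (hux : H.Reachable u x)
    (hxu : G.Adj x u) (hH : ¬H.Adj x u) : OnCycle G x := by
  classical
  obtain ⟨p⟩ := hux
  refine ⟨Walk.cons hxu (p.bypass.mapLe hle),
    (Walk.cons_isCycle_iff _ _).2 ⟨p.bypass_isPath.mapLe hle, fun he => hH ?_⟩⟩
  rw [Walk.mapLe, Walk.edges_map, List.mem_map] at he
  obtain ⟨e, he, hxe⟩ := he
  rw [Hom.coe_ofLE, Sym2.map_id, id] at hxe
  exact p.bypass.adj_of_mem_edges (hxe ▸ he)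

end Connectivity

section Robustness

variable {G : SimpleGraph V} {M : Set V}

lemma robustMIS_of_forall_exists_adj (hM : IsMIS G M)
    (h : ∀ H ≤ G, H.Connected → ∀ x ∉ M, ∃ u ∈ M, H.Adj x u) : RobustMIS G M :=
  fun H hle hc => isMIS_iff.2 ⟨hM.1.mono hle, h H hle hc⟩

lemma Sputnik.robustMIS (hsp : Sputnik G) (hM : IsMIS G M) : RobustMIS G M := by
  refine robustMIS_of_forall_exists_adj hM fun H hle hc x hx => ?_
  obtain ⟨u, hu, hxu⟩ := (isMIS_iff.1 hM).2 x hx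
  by_cases hH : H.Adj x u
  · exact ⟨u, hu, hH⟩
  obtain ⟨w, hxw, hw⟩ := hsp x (onCycle_of_reachable_of_not_adj hle (hc.preconnected u x) hxu hH)
  by_cases hwM : w ∈ M
  · have : Nontrivial V := ⟨⟨w, x, G.ne_of_adj hxw.symm⟩⟩
    obtain ⟨z, hwz⟩ := hc.preconnected.exists_adj_of_nontrivial w
    obtain rfl : z = x := hw.unique (hle hwz) hxw.symm
    exact ⟨w, hwM, hwz.symm⟩
  · obtain ⟨m, hm, hwm⟩ := (isMIS_iff.1 hM).2 w hwM
    obtain rfl : m = x := hw.unique hwm hxw.symm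
    exact absurd hm hx

lemma IsCompleteBipartiteWith.adj_iff {V1 V2 : Set V} (h : IsCompleteBipartiteWith G V1 V2)
    {u w : V} : G.Adj u w ↔ (u ∈ V1 ↔ w ∉ V1) := by
  have hu := h.1 u
  have hw := h.1 w
  rw [h.2]
  tauto

lemma IsCompleteBipartiteWith.neighborSet_subset {V1 V2 : Set V}
    (h : IsCompleteBipartiteWith G V1 V2) (hM : IsMIS G M) {x : V} (hx : x ∉ M) :
    G.neighborSet x ⊆ M := by
  intro z hxz
  obtain ⟨u, hu, hxu⟩ := (isMIS_iff.1 hM).2 x hx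
  have hside : {w | w ∈ V1 ↔ u ∈ V1} = M := by
    refine hM.2 _ (fun a ha b hb hab => ?_) fun m hm => ?_
    · rw [h.adj_iff] at hab
      simp only [Set.mem_ofPred_eq] at ha hb
      tauto
    · by_contra hmu
      exact hM.1 m hm u hu (h.adj_iff.2 (by simp only [Set.mem_ofPred_eq] at hmu; tauto))
  rw [← hside]
  rw [mem_neighborSet, h.adj_iff] at hxz
  rw [h.adj_iff] at hxu
  show z ∈ V1 ↔ u ∈ V1
  tauto

lemma IsCompleteBipartite.robustMIS (h : IsCompleteBipartite G) (hM : IsMIS G M) :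
    RobustMIS G M := by
  obtain ⟨V1, V2, h⟩ := h
  refine robustMIS_of_forall_exists_adj hM fun H hle hc x hx => ?_
  obtain ⟨u, -, hxu⟩ := (isMIS_iff.1 hM).2 x hx
  have : Nontrivial V := ⟨⟨x, u, G.ne_of_adj hxu⟩⟩
  obtain ⟨z, hxz⟩ := hc.preconnected.exists_adj_of_nontrivial x
  exact ⟨z, h.neighborSet_subset hM hx (hle hxz), hxz⟩

lemma isCompleteBipartiteWith_of_indep {A B : Set V} (hA : Indep G A) (hB : Indep G B)
    (hcover : ∀ x, x ∈ A ∨ x ∈ B) (hAB : ∀ a ∈ A, ∀ b ∈ B, G.Adj a b) :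
    IsCompleteBipartiteWith G A B := by
  refine ⟨fun x => ⟨fun hxA hxB => G.irrefl (hAB x hxA x hxB),
    (hcover x).resolve_right⟩, fun u w => ⟨fun huw => ?_, ?_⟩⟩
  · rcases hcover u with hu | hu <;> rcases hcover w with hw | hw
    · exact absurd huw (hA u hu w hw)
    · exact Or.inl ⟨hu, hw⟩
    · exact Or.inr ⟨hu, hw⟩
    · exact absurd huw (hB u hu w hw)
  · rintro (⟨hu, hw⟩ | ⟨hu, hw⟩)
    · exact hAB u hu w hw
    · exact (hAB w hw u hu).symm

/-- `hK` says that deleting the edges between `y` and `M` leaves `G` connected; there `y` has no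
neighbour in `M`. -/
lemma not_robustMIS_of_forall_reachable (hconn : G.Connected) {y : V} (hy : y ∉ M)
    (hK : ∀ a, G.Adj y a → ∃ b, G.Adj y b ∧ b ∉ M ∧ (G.deleteIncidenceSet y).Reachable a b) :
    ¬RobustMIS G M := by
  intro hrob
  set H := G.deleteEdges ((fun m => s(y, m)) '' M)
  have hHadj : ∀ {a b}, H.Adj a b ↔ G.Adj a b ∧ ¬((a = y ∧ b ∈ M) ∨ (b = y ∧ a ∈ M)) := by
    intro a b
    simp only [H, deleteEdges_adj, Set.mem_image, Sym2.eq_iff]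
    constructor
    · rintro ⟨hab, hne⟩
      exact ⟨hab, by
        rintro (⟨rfl, hb⟩ | ⟨rfl, ha⟩)
        exacts [hne ⟨b, hb, .inl ⟨rfl, rfl⟩⟩, hne ⟨a, ha, .inr ⟨rfl, rfl⟩⟩]⟩
    · rintro ⟨hab, hne⟩
      exact ⟨hab, by rintro ⟨m, hm, ⟨rfl, rfl⟩ | ⟨rfl, rfl⟩⟩ <;> tauto⟩
  have hconnH : H.Connected := by
    refine (connected_iff_exists_forall_reachable H).2 ⟨y, fun x => Reachable.symm ?_⟩
    refine hconn.forall_of_adj_closed (P := (H.Reachable · y)) (Reachable.refl y)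
      (fun x b hxb hb => ?_) x
    by_cases hH : H.Adj x b
    · exact hH.reachable.trans hb
    have hdel : (x = y ∧ b ∈ M) ∨ (b = y ∧ x ∈ M) := by
      by_contra h
      exact hH (hHadj.2 ⟨hxb, h⟩)
    rcases hdel with ⟨rfl, -⟩ | ⟨rfl, -⟩
    · rfl
    obtain ⟨c, hc, hcM, hxc⟩ := hK x hxb.symm
    refine (hxc.mono fun d e hde => hHadj.2 ⟨(deleteIncidenceSet_adj.1 hde).1, ?_⟩).trans
      (hHadj.2 ⟨hc.symm, ?_⟩).reachable
    · have := (deleteIncidenceSet_adj.1 hde).2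
      tauto
    · tauto
  obtain ⟨m, hm, hym⟩ := (isMIS_iff.1 (hrob H (deleteEdges_le _) hconnH)).2 y hy
  exact (hHadj.1 hym).2 (Or.inl ⟨rfl, hm⟩)

end Robustness

section AllRobust

variable {G : SimpleGraph V}

def AllMISRobust (G : SimpleGraph V) : Prop :=
  ∀ M : Set V, IsMIS G M → RobustMIS G M

lemma AllMISRobust.neighborSet_subset (hrob : AllMISRobust G) (hconn : G.Connected) {y z : V}
    (hz : ∀ b, G.Adj y b → (G.deleteIncidenceSet y).Reachable b z) {M : Set V} (hM : IsMIS G M)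
    (hy : y ∉ M) : G.neighborSet y ⊆ M := by
  intro t hyt
  by_contra ht
  exact not_robustMIS_of_forall_reachable hconn hy
    (fun a ha => ⟨t, hyt, ht, (hz a ha).trans (hz t hyt).symm⟩) (hrob M hM)

lemma indep_neighborSet_of_forced {y : V}
    (hforced : ∀ M, IsMIS G M → y ∉ M → G.neighborSet y ⊆ M) : Indep G (G.neighborSet y) := by
  intro r hr r' hr' hrr'
  obtain ⟨M, hM, hrM, -⟩ := exists_isMIS_of_not_adj (G.irrefl (v := r))
  exact hM.1 r hrM r' (hforced M hM (hM.1.notMem_of_adj hrM hr) hr') hrr'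

lemma reachable_of_forced {v y r a : V}
    (hforced : ∀ M, IsMIS G M → y ∉ M → G.neighborSet y ⊆ M) (hvy : G.Adj v y) (hyr : G.Adj y r)
    (hrv : r ≠ v) (hva : G.Adj v a) : (G.deleteIncidenceSet v).Reachable y a := by
  by_contra h
  have hra : ¬G.Adj r a := fun hra => h <|
    (deleteIncidenceSet_adj.2 ⟨hyr, (G.ne_of_adj hvy).symm, hrv⟩).reachable.trans
      (deleteIncidenceSet_adj.2 ⟨hra, hrv, (G.ne_of_adj hva).symm⟩).reachable
  obtain ⟨M, hM, hrM, haM⟩ := exists_isMIS_of_not_adj hra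
  exact hM.1 v (hforced M hM (hM.1.notMem_of_adj hrM hyr) hvy.symm) a haM hva

lemma adj_of_forced {v y r u : V} (hforced : ∀ M, IsMIS G M → y ∉ M → G.neighborSet y ⊆ M)
    (hvy : G.Adj v y) (hyr : G.Adj y r) (hur : G.Adj u r) : G.Adj v u := by
  by_contra hvu
  obtain ⟨M, hM, hvM, huM⟩ := exists_isMIS_of_not_adj hvu
  exact hM.1 u huM r (hforced M hM (hM.1.notMem_of_adj hvM hvy.symm) hyr) hur

lemma indep_iUnion_of_subset_component {v : V}
    {S : (G.deleteIncidenceSet v).ConnectedComponent → Set V} (hS : ∀ c, Indep G (S c))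
    (hSc : ∀ c, ∀ x ∈ S c, x ≠ v ∧ (G.deleteIncidenceSet v).connectedComponentMk x = c) :
    Indep G (⋃ c, S c) := by
  intro x hx y hy hxy
  obtain ⟨c, hx⟩ := Set.mem_iUnion.1 hx
  obtain ⟨d, hy⟩ := Set.mem_iUnion.1 hy
  obtain ⟨hxv, rfl⟩ := hSc c x hx
  obtain ⟨hyv, rfl⟩ := hSc d y hy
  rw [ConnectedComponent.sound (deleteIncidenceSet_adj.2 ⟨hxy, hxv, hyv⟩).reachable] at hx
  exact hS _ x hx y hy hxy

lemma AllMISRobust.false_of_indep (hrob : AllMISRobust G) (hconn : G.Connected) {v : V}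
    {T : Set V} (hT : Indep G T) (hvT : ∃ t ∈ T, G.Adj v t)
    (hdom : ∀ b, G.Adj v b → ∃ b', G.Adj v b' ∧ (G.deleteIncidenceSet v).Reachable b b' ∧
      ∃ t ∈ T, G.Adj b' t) : False := by
  obtain ⟨M, hM, hTM⟩ := exists_isMIS_superset hT
  obtain ⟨t, ht, hvt⟩ := hvT
  refine not_robustMIS_of_forall_reachable hconn (hM.1.notMem_of_adj (hTM ht) hvt)
    (fun b hb => ?_) (hrob M hM)
  obtain ⟨b', hb', hbb', t', ht', hb't'⟩ := hdom b hb
  exact ⟨b', hb', hM.1.notMem_of_adj (hTM ht') hb't', hbb'⟩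

lemma AllMISRobust.false_of_dominating (hrob : AllMISRobust G) (hconn : G.Connected) {v : V}
    (hnp : ∀ b, G.Adj v b → ∃ t, G.Adj b t ∧ t ≠ v) {T : Set V} (hT : Indep G T) {a : V}
    (ha : G.Adj v a) (hTa : ∀ t ∈ T, (G.deleteIncidenceSet v).Reachable a t)
    (hvT : ∃ t ∈ T, G.Adj v t) (haT : ∃ t ∈ T, G.Adj a t) : False := by
  set κ := (G.deleteIncidenceSet v).connectedComponentMk
  -- In the component of `a` take `T`; in any other component `κ b` with `v ~ b` take `{t}`
  -- for some `b ~ t ≠ v`.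
  have hsel : ∀ c, ∃ S : Set V, Indep G S ∧ (∀ x ∈ S, x ≠ v ∧ κ x = c) ∧ (c = κ a → S = T) ∧
      ∀ b, G.Adj v b → κ b = c → ∃ b', G.Adj v b' ∧ κ b' = c ∧ ∃ t ∈ S, G.Adj b' t := by
    intro c
    by_cases hca : c = κ a
    · subst hca
      refine ⟨T, hT, fun t ht => ⟨fun htv => ?_, (ConnectedComponent.sound (hTa t ht)).symm⟩,
        fun _ => rfl, fun _ _ _ => ⟨a, ha, rfl, haT⟩⟩
      exact G.ne_of_adj ha (eq_of_reachable_deleteIncidenceSet (htv ▸ hTa t ht)).symm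
    by_cases hc : ∃ b, G.Adj v b ∧ κ b = c
    · obtain ⟨b, hb, rfl⟩ := hc
      obtain ⟨t, hbt, htv⟩ := hnp b hb
      refine ⟨{t}, indep_singleton t, ?_, fun h => absurd h hca,
        fun _ _ _ => ⟨b, hb, rfl, t, rfl, hbt⟩⟩
      rintro x rfl
      exact ⟨htv, (ConnectedComponent.sound
        (deleteIncidenceSet_adj.2 ⟨hbt, (G.ne_of_adj hb).symm, htv⟩).reachable).symm⟩
    · exact ⟨∅, fun _ h => h.elim, fun _ h => h.elim, fun h => absurd h hca,
        fun b hb hbc => absurd ⟨b, hb, hbc⟩ hc⟩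
  choose S hS hSc hSa hSdom using hsel
  refine hrob.false_of_indep hconn (v := v) (indep_iUnion_of_subset_component hS hSc) ?_
    fun b hb => ?_
  · obtain ⟨t, ht, hvt⟩ := hvT
    exact ⟨t, Set.mem_iUnion.2 ⟨κ a, hSa _ rfl ▸ ht⟩, hvt⟩
  · obtain ⟨b', hb', hbb', t, ht, hb't⟩ := hSdom _ b hb rfl
    exact ⟨b', hb', ConnectedComponent.exact hbb'.symm, t, Set.mem_iUnion.2 ⟨_, ht⟩, hb't⟩

lemma AllMISRobust.indep_neighborSet (hrob : AllMISRobust G) (hconn : G.Connected) {v : V}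
    (hnp : ∀ b, G.Adj v b → ∃ t, G.Adj b t ∧ t ≠ v) : Indep G (G.neighborSet v) := by
  intro a ha b hb hab
  refine hrob.false_of_dominating hconn hnp (indep_singleton b) ha ?_ ⟨b, rfl, hb⟩ ⟨b, rfl, hab⟩
  rintro t rfl
  exact (deleteIncidenceSet_adj.2 ⟨hab, (G.ne_of_adj ha).symm, (G.ne_of_adj hb).symm⟩).reachable

lemma AllMISRobust.adj_of_reachable (hrob : AllMISRobust G) (hconn : G.Connected) {v : V}
    (hnp : ∀ b, G.Adj v b → ∃ t, G.Adj b t ∧ t ≠ v) {a α t : V} (ha : G.Adj v a)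
    (hα : G.Adj v α) (hreach : (G.deleteIncidenceSet v).Reachable a α) (hat : G.Adj a t)
    (htv : t ≠ v) : G.Adj α t := by
  by_contra hαt
  refine hrob.false_of_dominating hconn hnp (indep_pair hαt) ha ?_
    ⟨α, Set.mem_insert α _, hα⟩ ⟨t, Set.mem_insert_of_mem α rfl, hat⟩
  rintro x (rfl | rfl)
  · exact hreach
  · exact (deleteIncidenceSet_adj.2 ⟨hat, (G.ne_of_adj ha).symm, htv⟩).reachable

lemma exists_adj_ne_of_not_hasPendantNeighbor {v : V} (hnp : ¬HasPendantNeighbor G v) {b : V}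
    (hb : G.Adj v b) : ∃ t, G.Adj b t ∧ t ≠ v := by
  by_contra! h
  exact hnp ⟨b, hb, v, hb.symm, h⟩

lemma AllMISRobust.isCompleteBipartite (hrob : AllMISRobust G) (hconn : G.Connected) {v : V}
    (hcyc : OnCycle G v) (hnp : ¬HasPendantNeighbor G v) : IsCompleteBipartite G := by
  have hnp' := fun b => exists_adj_ne_of_not_hasPendantNeighbor hnp (b := b)
  obtain ⟨a₁, a₂, h₁, h₂, hne, h₁₂⟩ := hcyc.exists_adj_adj_reachable
  -- `a₁` is not a cut vertex: its neighbours other than `v` are adjacent to `a₂`.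
  have hforced : ∀ M, IsMIS G M → a₁ ∉ M → G.neighborSet a₁ ⊆ M := by
    refine fun M hM => hrob.neighborSet_subset hconn (z := v) (fun b hb => ?_) hM
    rcases eq_or_ne b v with rfl | hbv
    · rfl
    have hb₂ := hrob.adj_of_reachable hconn hnp' h₁ h₂ h₁₂ hb hbv
    exact (deleteIncidenceSet_adj.2 ⟨hb₂.symm, (G.ne_of_adj hb).symm, hne.symm⟩).reachable.trans
      (deleteIncidenceSet_adj.2 ⟨h₂.symm, hne.symm, G.ne_of_adj h₁⟩).reachable
  obtain ⟨r, h₁r, hrv⟩ := hnp' a₁ h₁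
  have hcomp : ∀ a, G.Adj v a → (G.deleteIncidenceSet v).Reachable a₁ a :=
    fun a ha => reachable_of_forced hforced h₁ h₁r hrv ha
  have hAB : ∀ a ∈ G.neighborSet v, ∀ b ∈ G.neighborSet a₁, G.Adj a b := by
    intro a ha b hb
    rcases eq_or_ne b v with rfl | hbv
    exacts [ha.symm, hrob.adj_of_reachable hconn hnp' h₁ ha (hcomp a ha) hb hbv]
  have hcover : ∀ x, x ∈ G.neighborSet v ∨ x ∈ G.neighborSet a₁ := by
    refine hconn.forall_of_adj_closed (.inr h₁.symm) fun x b hxb hb => ?_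
    rcases hb with hb | hb
    · rcases eq_or_ne x v with rfl | hxv
      exacts [.inr h₁.symm,
        .inr (hrob.adj_of_reachable hconn hnp' hb h₁ (hcomp b hb).symm hxb.symm hxv)]
    · exact .inl (adj_of_forced hforced h₁ hb hxb)
  exact ⟨_, _, isCompleteBipartiteWith_of_indep (hrob.indep_neighborSet hconn hnp')
    (indep_neighborSet_of_forced hforced) hcover hAB⟩

end AllRobust

theorem stmt_8 (G : SimpleGraph V) (hconn : G.Connected) :
    (∀ M : Set V, IsMIS G M → RobustMIS G M) ↔
      (IsCompleteBipartite G ∨ Sputnik G) := by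
  refine ⟨fun hrob => or_iff_not_imp_right.2 fun hsp => ?_, ?_⟩
  · simp only [Sputnik, not_forall] at hsp
    obtain ⟨v, hcyc, hnp⟩ := hsp
    exact AllMISRobust.isCompleteBipartite hrob hconn hcyc hnp
  · rintro (h | h) M hM
    exacts [h.robustMIS hM, h.robustMIS hM]
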